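/- Let f be an absolutely continuous probability density on ℝ with a.e. derivative f′ and f > 0 a.e., and let k be a probability density on ℝ. Then for every s > 0: ∫_ℝ [ ∫_ℝ ( f(x − su) − f(x) ) k(u) du ]² f(x)^{-1} dx ≤ 2s ∫_{−s}^{s} ∫_ℝ ∫_ℝ |f′(x − tu)|² f(x)^{-1} dx · u² k(u) du dt. -/
import Mathlib


open MeasureTheory ENNReal



private lemma rpow_half_sq (x : ℝ≥0∞) : x ^ (2⁻¹ : ℝ) * x ^ (2⁻¹ : ℝ) = x := by
  rw [← ENNReal.rpow_add_of_nonneg _ _ (by norm_num) (by norm_num)]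
  norm_num

private lemma sq_rpow_half (x : ℝ≥0∞) : (x ^ ((1:ℝ)/2)) ^ (2:ℕ) = x := by
  rw [← ENNReal.rpow_natCast, ← ENNReal.rpow_mul]; norm_num

private lemma cs_lintegral {α : Type*} [MeasurableSpace α] (μ : Measure α)
    {h w : α → ℝ≥0∞} (hh : Measurable h) (hw : Measurable w) :
    (∫⁻ a, h a * w a ∂μ) ^ 2 ≤ (∫⁻ a, (h a) ^ 2 * w a ∂μ) * ∫⁻ a, w a ∂μ := by
  have hpq : Real.HolderConjugate 2 2 := by constructor <;> norm_num
  have h1 : AEMeasurable (fun a => h a * w a ^ (2⁻¹ : ℝ)) μ :=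
    (hh.mul (hw.pow_const _)).aemeasurable
  have h2 : AEMeasurable (fun a => w a ^ (2⁻¹ : ℝ)) μ := (hw.pow_const _).aemeasurable
  have key := ENNReal.lintegral_mul_le_Lp_mul_Lq μ hpq h1 h2
  have e1 : ∀ a, (fun a => h a * w a ^ (2⁻¹ : ℝ)) a * (fun a => w a ^ (2⁻¹ : ℝ)) a
      = h a * w a := by
    intro a; simp only [mul_assoc, rpow_half_sq]
  have e2 : ∀ a, ((fun a => h a * w a ^ (2⁻¹ : ℝ)) a) ^ (2:ℝ) = (h a) ^ 2 * w a := by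
    intro a
    rw [ENNReal.mul_rpow_of_nonneg _ _ (by norm_num : (0:ℝ) ≤ 2), ← ENNReal.rpow_mul]
    norm_num [ENNReal.rpow_two]
  have e3 : ∀ a, ((fun a => w a ^ (2⁻¹ : ℝ)) a) ^ (2:ℝ) = w a := by
    intro a; rw [← ENNReal.rpow_mul]; norm_num
  simp only [Pi.mul_apply, e1] at key
  calc (∫⁻ a, h a * w a ∂μ) ^ 2
      ≤ ((∫⁻ a, (h a * w a ^ (2⁻¹:ℝ)) ^ (2:ℝ) ∂μ) ^ ((1:ℝ)/2)
          * (∫⁻ a, (w a ^ (2⁻¹:ℝ)) ^ (2:ℝ) ∂μ) ^ ((1:ℝ)/2)) ^ 2 := by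
        exact pow_le_pow_left' key 2
    _ = (∫⁻ a, (h a) ^ 2 * w a ∂μ) * ∫⁻ a, w a ∂μ := by
        rw [mul_pow, sq_rpow_half, sq_rpow_half]
        congr 1
        · exact lintegral_congr fun a => e2 a
        · exact lintegral_congr fun a => e3 a

private lemma ofReal_abs_integral_le {α : Type*} [MeasurableSpace α] (μ : Measure α) (g : α → ℝ) :
    ENNReal.ofReal |∫ a, g a ∂μ| ≤ ∫⁻ a, ENNReal.ofReal |g a| ∂μ := by
  by_cases hg : Integrable g μ
  · calc ENNReal.ofReal |∫ a, g a ∂μ|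
        ≤ ENNReal.ofReal (∫ a, |g a| ∂μ) := by
          apply ENNReal.ofReal_le_ofReal
          simpa [Real.norm_eq_abs] using norm_integral_le_integral_norm (μ := μ) g
      _ = ∫⁻ a, ENNReal.ofReal |g a| ∂μ :=
          ofReal_integral_eq_lintegral_ofReal hg.abs
            (Filter.Eventually.of_forall fun a => abs_nonneg _)
  · rw [integral_undef hg]; simp
section
variable (f f' : ℝ → ℝ)

private lemma stepB (hf'_meas : Measurable f')
    (hf_AC : ∀ a b : ℝ, f b - f a = ∫ t in a..b, f' t)
    (s : ℝ) (hs : 0 < s) (x u : ℝ) :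
    ENNReal.ofReal ((f (x - s * u) - f x) ^ 2)
      ≤ ENNReal.ofReal s *
          ∫⁻ t in Set.Icc (-s) s, ENNReal.ofReal (u ^ 2 * f' (x - t * u) ^ 2) := by
  by_cases hu : u = 0
  · simp [hu]
  · set g : ℝ → ℝ := fun t => f' (x - t * u) with hg
    have hgm : Measurable g := hf'_meas.comp (measurable_const.sub (measurable_id.mul_const u))
    set I : ℝ := ∫ t in (0:ℝ)..s, g t with hIdef
    have hid : f (x - s * u) - f x = (-u) * I := by
      have h2 : I = u⁻¹ * (f x - f (x - u * s)) := by
        calc I = ∫ t in (0:ℝ)..s, f' (x - u * t) := by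
              rw [hIdef]
              exact intervalIntegral.integral_congr fun t _ => by simp [hg, mul_comm]
          _ = u⁻¹ • ∫ y in x - u * s..x - u * 0, f' y :=
              intervalIntegral.integral_comp_sub_mul f' hu x
          _ = u⁻¹ * (f x - f (x - u * s)) := by
              rw [mul_zero, sub_zero, ← hf_AC]; rfl
      rw [h2]
      field_simp
      ring
    rw [hid]
    have hsq : ((-u) * I) ^ 2 = u ^ 2 * I ^ 2 := by ring
    rw [hsq, ENNReal.ofReal_mul (sq_nonneg u)]
    have hI : ENNReal.ofReal (I ^ 2)
        ≤ ENNReal.ofReal s * ∫⁻ t in Set.Icc (-s) s, ENNReal.ofReal (g t ^ 2) := by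
      have h0 : I = ∫ t in Set.Ioc 0 s, g t := intervalIntegral.integral_of_le hs.le
      have h2 : ENNReal.ofReal |I| ≤ ∫⁻ t in Set.Ioc 0 s, ENNReal.ofReal |g t| := by
        rw [h0]; exact ofReal_abs_integral_le _ g
      have h3 := cs_lintegral (volume.restrict (Set.Ioc 0 s))
        (h := fun t => ENNReal.ofReal |g t|) (w := fun _ => 1)
        (ENNReal.measurable_ofReal.comp hgm.abs) measurable_const
      simp only [mul_one, lintegral_const, Measure.restrict_apply, MeasurableSet.univ,
        Set.univ_inter, Real.volume_Ioc, sub_zero, one_mul] at h3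
      have h4 : (∫⁻ t in Set.Ioc 0 s, ENNReal.ofReal |g t|) ^ 2
          ≤ (∫⁻ t in Set.Icc (-s) s, ENNReal.ofReal (g t ^ 2)) * ENNReal.ofReal s := by
        refine h3.trans (mul_le_mul_left ?_ _)
        refine (lintegral_mono fun t => le_of_eq ?_).trans
          (lintegral_mono_set (fun t ht => ?_))
        · rw [← ENNReal.ofReal_pow (abs_nonneg _), sq_abs]
        · exact ⟨by linarith [ht.1, hs], ht.2⟩
      calc ENNReal.ofReal (I ^ 2) = (ENNReal.ofReal |I|) ^ 2 := by
            rw [← sq_abs, ENNReal.ofReal_pow (abs_nonneg _)]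
        _ ≤ (∫⁻ t in Set.Ioc 0 s, ENNReal.ofReal |g t|) ^ 2 := pow_le_pow_left' h2 2
        _ ≤ (∫⁻ t in Set.Icc (-s) s, ENNReal.ofReal (g t ^ 2)) * ENNReal.ofReal s := h4
        _ = ENNReal.ofReal s * ∫⁻ t in Set.Icc (-s) s, ENNReal.ofReal (g t ^ 2) :=
            mul_comm _ _
    calc ENNReal.ofReal (u ^ 2) * ENNReal.ofReal (I ^ 2)
        ≤ ENNReal.ofReal (u ^ 2) *
            (ENNReal.ofReal s * ∫⁻ t in Set.Icc (-s) s, ENNReal.ofReal (g t ^ 2)) :=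
          mul_le_mul_right hI _
      _ = ENNReal.ofReal s *
            ∫⁻ t in Set.Icc (-s) s, ENNReal.ofReal (u ^ 2) * ENNReal.ofReal (g t ^ 2) := by
          rw [lintegral_const_mul' _ _ ENNReal.ofReal_ne_top]; ring
      _ = ENNReal.ofReal s *
            ∫⁻ t in Set.Icc (-s) s, ENNReal.ofReal (u ^ 2 * g t ^ 2) := by
          congr 1; exact lintegral_congr fun t => (ENNReal.ofReal_mul (sq_nonneg u)).symm
end

private lemma stepA (f k : ℝ → ℝ) (hf_meas : Measurable f) (hk_meas : Measurable k)
    (hk_nonneg : ∀ x, 0 ≤ k x) (hk_prob : ∫⁻ x, ENNReal.ofReal (k x) = 1)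
    (s : ℝ) (x : ℝ) (hx : 0 < f x) :
    ENNReal.ofReal ((∫ u, (f (x - s * u) - f x) * k u) ^ 2 / f x)
      ≤ ∫⁻ u, ENNReal.ofReal ((f (x - s * u) - f x) ^ 2) * ENNReal.ofReal (k u)
          * (ENNReal.ofReal (f x))⁻¹ := by
  set D : ℝ → ℝ := fun u => f (x - s * u) - f x with hD
  have hDm : Measurable D :=
    (hf_meas.comp (measurable_const.sub (measurable_const.mul measurable_id))).sub
      measurable_const
  have key : ENNReal.ofReal ((∫ u, D u * k u) ^ 2)
      ≤ ∫⁻ u, ENNReal.ofReal (D u ^ 2) * ENNReal.ofReal (k u) := by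
    have h1 : ENNReal.ofReal |∫ u, D u * k u|
        ≤ ∫⁻ u, ENNReal.ofReal |D u| * ENNReal.ofReal (k u) := by
      refine (ofReal_abs_integral_le volume _).trans (le_of_eq (lintegral_congr fun u => ?_))
      rw [abs_mul, abs_of_nonneg (hk_nonneg u), ENNReal.ofReal_mul (abs_nonneg _)]
    have h3 := cs_lintegral volume (h := fun u => ENNReal.ofReal |D u|)
      (w := fun u => ENNReal.ofReal (k u))
      (ENNReal.measurable_ofReal.comp hDm.abs) (ENNReal.measurable_ofReal.comp hk_meas)
    rw [hk_prob, mul_one] at h3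
    calc ENNReal.ofReal ((∫ u, D u * k u) ^ 2)
        = (ENNReal.ofReal |∫ u, D u * k u|) ^ 2 := by
          rw [← sq_abs, ENNReal.ofReal_pow (abs_nonneg _)]
      _ ≤ (∫⁻ u, ENNReal.ofReal |D u| * ENNReal.ofReal (k u)) ^ 2 := pow_le_pow_left' h1 2
      _ ≤ ∫⁻ u, (ENNReal.ofReal |D u|) ^ 2 * ENNReal.ofReal (k u) := h3
      _ = ∫⁻ u, ENNReal.ofReal (D u ^ 2) * ENNReal.ofReal (k u) :=
          lintegral_congr fun u => by rw [← ENNReal.ofReal_pow (abs_nonneg _), sq_abs]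
  calc ENNReal.ofReal ((∫ u, D u * k u) ^ 2 / f x)
      = ENNReal.ofReal ((∫ u, D u * k u) ^ 2) * (ENNReal.ofReal (f x))⁻¹ := by
        rw [div_eq_mul_inv, ENNReal.ofReal_mul (sq_nonneg _), ENNReal.ofReal_inv_of_pos hx]
    _ ≤ (∫⁻ u, ENNReal.ofReal (D u ^ 2) * ENNReal.ofReal (k u)) * (ENNReal.ofReal (f x))⁻¹ :=
        mul_le_mul_left key _
    _ = ∫⁻ u, ENNReal.ofReal (D u ^ 2) * ENNReal.ofReal (k u) * (ENNReal.ofReal (f x))⁻¹ :=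
        (lintegral_mul_const' _ _ (ENNReal.inv_ne_top.mpr (ENNReal.ofReal_pos.mpr hx).ne')).symm
set_option maxHeartbeats 1000000 in
/-- Let `f` be an absolutely continuous probability density on `ℝ` with a.e.
derivative `f′` and `f > 0` a.e., and let `k` be a probability density on `ℝ`.  Then for every
`s > 0`:
`∫ [∫ (f(x−su) − f(x)) k(u) du]² f(x)⁻¹ dx
  ≤ 2s ∫_{−s}^{s} ∫ [∫ |f′(x−tu)|² f(x)⁻¹ dx] u² k(u) du dt`. -/
theorem convolution_perturbation_chi_square_bound
    (f f' k : ℝ → ℝ)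
    (hf_meas : Measurable f) (hf'_meas : Measurable f') (hk_meas : Measurable k)
    (hf_nonneg : ∀ x, 0 ≤ f x) (hk_nonneg : ∀ x, 0 ≤ k x)
    (hf_prob : ∫⁻ x, ENNReal.ofReal (f x) = 1)
    (hk_prob : ∫⁻ x, ENNReal.ofReal (k x) = 1)
    (hf_pos : ∀ᵐ x, 0 < f x)
    (hf_AC : ∀ a b : ℝ, f b - f a = ∫ t in a..b, f' t)
    (s : ℝ) (hs : 0 < s) :
    ∫⁻ x, ENNReal.ofReal ((∫ u, (f (x - s * u) - f x) * k u) ^ 2 / f x)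
      ≤ ENNReal.ofReal (2 * s) *
          ∫⁻ t in Set.Icc (-s) s,
            ∫⁻ u, (∫⁻ x, ENNReal.ofReal (|f' (x - t * u)| ^ 2 / f x))
                    * ENNReal.ofReal (u ^ 2 * k u) := by
  set T : Set ℝ := Set.Icc (-s) s with hT
  set H : ℝ → ℝ → ℝ → ℝ≥0∞ := fun x u t =>
    ENNReal.ofReal (u ^ 2 * f' (x - t * u) ^ 2) *
      (ENNReal.ofReal (k u) * (ENNReal.ofReal (f x))⁻¹) with hH
  -- master measurability
  have hHm : Measurable (fun p : ℝ × ℝ × ℝ => H p.1 p.2.1 p.2.2) := by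
    apply Measurable.mul
    · exact ENNReal.measurable_ofReal.comp
        ((measurable_snd.fst.pow_const 2).mul
          ((hf'_meas.comp (measurable_fst.sub (measurable_snd.snd.mul measurable_snd.fst))).pow_const 2))
    · exact (ENNReal.measurable_ofReal.comp (hk_meas.comp measurable_snd.fst)).mul
        ((ENNReal.measurable_ofReal.comp (hf_meas.comp measurable_fst)).inv)
  -- step 2 : a.e. pointwise bound in x
  have hstep2 : ∀ᵐ x, (∫⁻ u, ENNReal.ofReal ((f (x - s * u) - f x) ^ 2)
        * ENNReal.ofReal (k u) * (ENNReal.ofReal (f x))⁻¹)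
      ≤ ENNReal.ofReal s * ∫⁻ u, ∫⁻ t in T, H x u t := by
    filter_upwards [hf_pos] with x hx
    have hC : ENNReal.ofReal (k x) = ENNReal.ofReal (k x) := rfl
    have hCne : ∀ u : ℝ, (ENNReal.ofReal (k u) * (ENNReal.ofReal (f x))⁻¹) ≠ ⊤ :=
      fun u => ENNReal.mul_ne_top ENNReal.ofReal_ne_top
        (ENNReal.inv_ne_top.mpr (ENNReal.ofReal_pos.mpr hx).ne')
    rw [← lintegral_const_mul' _ _ ENNReal.ofReal_ne_top]
    refine lintegral_mono fun u => ?_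
    calc ENNReal.ofReal ((f (x - s * u) - f x) ^ 2) * ENNReal.ofReal (k u)
          * (ENNReal.ofReal (f x))⁻¹
        = ENNReal.ofReal ((f (x - s * u) - f x) ^ 2)
            * (ENNReal.ofReal (k u) * (ENNReal.ofReal (f x))⁻¹) := mul_assoc _ _ _
      _ ≤ (ENNReal.ofReal s * ∫⁻ t in T, ENNReal.ofReal (u ^ 2 * f' (x - t * u) ^ 2))
            * (ENNReal.ofReal (k u) * (ENNReal.ofReal (f x))⁻¹) :=
          mul_le_mul_left (stepB f f' hf'_meas hf_AC s hs x u) _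
      _ = ENNReal.ofReal s * ((∫⁻ t in T, ENNReal.ofReal (u ^ 2 * f' (x - t * u) ^ 2))
            * (ENNReal.ofReal (k u) * (ENNReal.ofReal (f x))⁻¹)) := mul_assoc _ _ _
      _ = ENNReal.ofReal s * ∫⁻ t in T, H x u t := by
          rw [lintegral_mul_const' _ _ (hCne u)]
  -- Tonelli swaps
  have swap1 : ∫⁻ x, ∫⁻ u, ∫⁻ t in T, H x u t = ∫⁻ u, ∫⁻ x, ∫⁻ t in T, H x u t := by
    refine lintegral_lintegral_swap ?_
    refine Measurable.aemeasurable ?_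
    exact Measurable.lintegral_prod_right
      (f := fun p : ℝ × ℝ => fun t => H p.1 p.2 t)
      (hHm.comp ((measurable_fst.fst).prodMk ((measurable_fst.snd).prodMk measurable_snd)))
  have swap2 : ∀ u : ℝ, ∫⁻ x, ∫⁻ t in T, H x u t = ∫⁻ t in T, ∫⁻ x, H x u t := by
    intro u
    refine lintegral_lintegral_swap ?_
    exact (hHm.comp (measurable_fst.prodMk (measurable_const.prodMk measurable_snd))).aemeasurable
  have swap3 : ∫⁻ u, ∫⁻ t in T, ∫⁻ x, H x u t = ∫⁻ t in T, ∫⁻ u, ∫⁻ x, H x u t := by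
    refine lintegral_lintegral_swap ?_
    refine Measurable.aemeasurable ?_
    exact Measurable.lintegral_prod_right
      (f := fun p : ℝ × ℝ => fun x => H x p.1 p.2)
      (hHm.comp (measurable_snd.prodMk measurable_fst))
  -- inner rearrangement
  have rear : ∀ t u : ℝ, ∫⁻ x, H x u t
      = (∫⁻ x, ENNReal.ofReal (|f' (x - t * u)| ^ 2 / f x)) * ENNReal.ofReal (u ^ 2 * k u) := by
    intro t u
    have hcong : ∫⁻ x, H x u t
        = ∫⁻ x, ENNReal.ofReal (u ^ 2 * k u) * ENNReal.ofReal (|f' (x - t * u)| ^ 2 / f x) := by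
      refine lintegral_congr_ae ?_
      filter_upwards [hf_pos] with x hx
      simp only [hH]
      rw [ENNReal.ofReal_div_of_pos hx, ENNReal.div_eq_inv_mul, sq_abs,
        ENNReal.ofReal_mul (sq_nonneg u), ENNReal.ofReal_mul (sq_nonneg u)]
      ring
    rw [hcong, lintegral_const_mul' _ _ ENNReal.ofReal_ne_top, mul_comm]
  calc ∫⁻ x, ENNReal.ofReal ((∫ u, (f (x - s * u) - f x) * k u) ^ 2 / f x)
      ≤ ∫⁻ x, ∫⁻ u, ENNReal.ofReal ((f (x - s * u) - f x) ^ 2)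
          * ENNReal.ofReal (k u) * (ENNReal.ofReal (f x))⁻¹ := by
        refine lintegral_mono_ae ?_
        filter_upwards [hf_pos] with x hx
        exact stepA f k hf_meas hk_meas hk_nonneg hk_prob s x hx
    _ ≤ ∫⁻ x, ENNReal.ofReal s * ∫⁻ u, ∫⁻ t in T, H x u t := lintegral_mono_ae hstep2
    _ = ENNReal.ofReal s * ∫⁻ x, ∫⁻ u, ∫⁻ t in T, H x u t :=
        lintegral_const_mul' _ _ ENNReal.ofReal_ne_top
    _ = ENNReal.ofReal s * ∫⁻ t in T, ∫⁻ u, ∫⁻ x, H x u t := by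
        rw [swap1, lintegral_congr swap2, swap3]
    _ = ENNReal.ofReal s * ∫⁻ t in T, ∫⁻ u,
          (∫⁻ x, ENNReal.ofReal (|f' (x - t * u)| ^ 2 / f x)) * ENNReal.ofReal (u ^ 2 * k u) := by
        congr 1
        exact lintegral_congr fun t => lintegral_congr fun u => rear t u
    _ ≤ ENNReal.ofReal (2 * s) * ∫⁻ t in T, ∫⁻ u,
          (∫⁻ x, ENNReal.ofReal (|f' (x - t * u)| ^ 2 / f x)) * ENNReal.ofReal (u ^ 2 * k u) :=
        mul_le_mul_left (ENNReal.ofReal_le_ofReal (by linarith)) _
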